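/- arXiv:2512.21158 — 4 statements merged into one kernel-verified Lean document; each statement's English description precedes it below -/
import Mathlib

section
/- Let d ≥ 1, let 𝒪 ⊆ ℝ^d be an open set, let p ≥ 2 and K > 0 and λ₁ > 0 be real numbers. Let u, v : 𝒪 → ℝ be differentiable functions such that u, v, ∇u and ∇v are square-integrable on 𝒪 and |u|^p and |v|^p are integrable on 𝒪, and suppose that the Poincaré inequality λ₁ ∫_𝒪 w(x)² dx ≤ ∫_𝒪 |∇w(x)|² dx holds for w = u, w = v and w = u − v. Then c_K(u) ∫_𝒪 u(x)(u(x) − v(x)) dx − c_K(v) ∫_𝒪 v(x)(u(x) − v(x)) dx ≤ (1/2) ∫_𝒪 |∇(u − v)(x)|² dx + C(K) ∫_𝒪 (u(x) − v(x))² dx + (1/4) ( ∫_𝒪 |u(x)|^{p−2}(u(x) − v(x))² dx + ∫_𝒪 |v(x)|^{p−2}(u(x) − v(x))² dx ), where C(K) = [1 + (2 + p² · 2^{2p−3}) K λ₁^{−1}] K. -/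
/-!
Write `a = c_K(u)`, `b = c_K(v)`, `N(w) = ∫ w²`. Polarization turns the left-hand side into
`((a - b) (N(u) - N(v)) + (a + b) N(u - v)) / 2`, and `a + b ≤ 2K`. The cut-off satisfies
`|c_K(s) - c_K(t)| · max(s, K) · max(t, K) ≤ K² |s - t|`. By Cauchy–Schwarz (and, for `P`, the
pointwise bound `||x|^p - |y|^p| ≤ p (|x|^(p-1) + |y|^(p-1)) |x - y|`), the differences
`E(u) - E(v)`, `P(u) - P(v)` and `N(u) - N(v)` are bounded by norms of `u - v` times square roots
of `E`, `P` and `N`, and by Poincaré all of these roots are at most `√(max(E + P, K))` (up to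
`λ₁^(-1/2)` for `N`). These factors cancel against the denominator coming from the cut-off, and
Young's inequality splits what remains into the three terms of the right-hand side, even with
`2p²` in place of `p² 2^(2p-3)`.
-/

open MeasureTheory

/-- The cut-off coefficient `c_K(w)` of the paper: with
`E(w) = ∫_𝒪 ‖∇w‖²` and `P(w) = ∫_𝒪 |w|^p`, it equals `E(w) + P(w)` when
`E(w) + P(w) ≤ K`, and `K² / (E(w) + P(w))` otherwise. -/
noncomputable def cutoffCoeff {d : ℕ} (𝒪 : Set (EuclideanSpace ℝ (Fin d)))
    (p K : ℝ) (w : EuclideanSpace ℝ (Fin d) → ℝ) : ℝ :=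
  if (∫ x in 𝒪, ‖gradient w x‖ ^ 2) + (∫ x in 𝒪, |w x| ^ p) ≤ K then
    (∫ x in 𝒪, ‖gradient w x‖ ^ 2) + (∫ x in 𝒪, |w x| ^ p)
  else K ^ 2 / ((∫ x in 𝒪, ‖gradient w x‖ ^ 2) + (∫ x in 𝒪, |w x| ^ p))

noncomputable def cutoff (K s : ℝ) : ℝ := if s ≤ K then s else K ^ 2 / s

lemma cutoff_le {K s : ℝ} (hK : 0 < K) : cutoff K s ≤ K := by
  unfold cutoff
  split_ifs with h
  · exact h
  · rw [div_le_iff₀ (by linarith)]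
    nlinarith

lemma abs_cutoff_sub_cutoff_mul_le {K s t : ℝ} (hK : 0 < K) (hs : 0 ≤ s) (ht : 0 ≤ t) :
    |cutoff K s - cutoff K t| * (max s K * max t K) ≤ K ^ 2 * |s - t| := by
  wlog hts : t ≤ s generalizing s t
  · rw [abs_sub_comm, abs_sub_comm s, mul_comm (max s K)]
    exact this ht hs (by linarith)
  unfold cutoff
  rw [abs_of_nonneg (sub_nonneg.2 hts)]
  split_ifs with hsK htK htK
  · rw [max_eq_right hsK, max_eq_right htK, abs_of_nonneg (by linarith)]
    nlinarith
  · exact absurd (hts.trans hsK) htK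
  · push Not at hsK
    have hs0 : 0 < s := hK.trans hsK
    have key : (K ^ 2 / s - t) * (s * K) = K * (K ^ 2 - t * s) := by field_simp
    rw [max_eq_left hsK.le, max_eq_right htK, ← abs_of_pos (by positivity : 0 < s * K),
      ← abs_mul, key, abs_le]
    constructor
    · nlinarith [mul_nonneg (sub_nonneg.2 htK) (add_nonneg hK.le hs)]
    · nlinarith [mul_nonneg (sub_nonneg.2 hsK.le) (add_nonneg hK.le ht)]
  · push Not at hsK htK
    have hs0 : 0 < s := hK.trans hsK
    have ht0 : 0 < t := hK.trans htK
    have key : (K ^ 2 / s - K ^ 2 / t) * (s * t) = K ^ 2 * (t - s) := by field_simp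
    rw [max_eq_left hsK.le, max_eq_left htK.le, ← abs_of_pos (by positivity : 0 < s * t),
      ← abs_mul, key, abs_le]
    constructor <;> nlinarith

lemma cutoffCoeff_eq_cutoff {d : ℕ} (𝒪 : Set (EuclideanSpace ℝ (Fin d))) (p K : ℝ)
    (w : EuclideanSpace ℝ (Fin d) → ℝ) :
    cutoffCoeff 𝒪 p K w = cutoff K ((∫ x in 𝒪, ‖gradient w x‖ ^ 2) + ∫ x in 𝒪, |w x| ^ p) :=
  rfl

lemma rpow_sub_rpow_le_mul_sub {a b p : ℝ} (hb : 0 ≤ b) (hba : b ≤ a) (hp : 1 ≤ p) :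
    a ^ p - b ^ p ≤ p * a ^ (p - 1) * (a - b) := by
  rcases hba.eq_or_lt with rfl | hba
  · simp
  have hslope := (convexOn_rpow hp).slope_le_of_hasDerivAt (Set.mem_Ici.2 hb)
    (Set.mem_Ici.2 (hb.trans hba.le)) hba (Real.hasDerivAt_rpow_const (Or.inr hp))
  rw [slope_def_field, div_le_iff₀ (sub_pos.2 hba)] at hslope
  exact hslope

lemma abs_rpow_abs_sub_rpow_abs_le {x y p : ℝ} (hp : 1 ≤ p) :
    |(|x| ^ p - |y| ^ p)| ≤ p * (|x| ^ (p - 1) + |y| ^ (p - 1)) * |x - y| := by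
  wlog hyx : |y| ≤ |x| generalizing x y
  · rw [abs_sub_comm, abs_sub_comm x, add_comm]
    exact this (by linarith)
  have hmono : |y| ^ p ≤ |x| ^ p := Real.rpow_le_rpow (abs_nonneg y) hyx (by linarith)
  rw [abs_of_nonneg (sub_nonneg.2 hmono)]
  calc |x| ^ p - |y| ^ p ≤ p * |x| ^ (p - 1) * (|x| - |y|) :=
        rpow_sub_rpow_le_mul_sub (abs_nonneg y) hyx hp
    _ ≤ p * (|x| ^ (p - 1) + |y| ^ (p - 1)) * |x - y| := by
        gcongr
        · exact le_add_of_nonneg_right (by positivity)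
        · exact abs_sub_abs_le_abs_sub x y

lemma rpow_mul_rpow_le_rpow_add_rpow {a b r s : ℝ} (ha : 0 ≤ a) (hb : 0 ≤ b) (hr : 0 ≤ r)
    (hs : 0 ≤ s) (hrs : r + s ≠ 0) : a ^ r * b ^ s ≤ a ^ (r + s) + b ^ (r + s) := by
  wlog hab : b ≤ a generalizing a b r s
  · rw [mul_comm, add_comm, add_comm r]
    exact this hb ha hs hr (by rwa [add_comm]) (by linarith)
  calc a ^ r * b ^ s ≤ a ^ r * a ^ s := by gcongr
    _ = a ^ (r + s) := (Real.rpow_add' ha hrs).symm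
    _ ≤ a ^ (r + s) + b ^ (r + s) := le_add_of_nonneg_right (by positivity)

lemma rpow_sub_one_mul_eq {a b p : ℝ} (hp : p ≠ 1) :
    |a| ^ (p - 1) * |b| = (|a| ^ (p / 2 - 1) * |b|) * |a| ^ (p / 2) := by
  rw [mul_right_comm, ← Real.rpow_add' (abs_nonneg a) (by contrapose! hp; linarith)]
  ring_nf

lemma rpow_mul_half_sq {a : ℝ} (ha : 0 ≤ a) (q : ℝ) : (a ^ (q / 2)) ^ 2 = a ^ q := by
  rw [← Real.rpow_mul_natCast ha]
  ring_nf

lemma rpow_half_sub_one_mul_abs_sq (a b p : ℝ) :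
    (|a| ^ (p / 2 - 1) * |b|) ^ 2 = |a| ^ (p - 2) * b ^ 2 := by
  rw [mul_pow, sq_abs, show p / 2 - 1 = (p - 2) / 2 by ring, rpow_mul_half_sq (abs_nonneg _)]

section L2

variable {α : Type*} [MeasurableSpace α] {μ : Measure α}

lemma integral_mul_le_sqrt_mul_sqrt {f g : α → ℝ} (hf : MemLp f 2 μ) (hg : MemLp g 2 μ) :
    ∫ x, f x * g x ∂μ ≤ √(∫ x, f x ^ 2 ∂μ) * √(∫ x, g x ^ 2 ∂μ) := by
  have hf' : MemLp (fun x => |f x|) (ENNReal.ofReal 2) μ := by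
    rw [ENNReal.ofReal_ofNat]; exact hf.abs
  have hg' : MemLp (fun x => |g x|) (ENNReal.ofReal 2) μ := by
    rw [ENNReal.ofReal_ofNat]; exact hg.abs
  calc ∫ x, f x * g x ∂μ ≤ ∫ x, |f x| * |g x| ∂μ :=
        integral_mono (hf.integrable_mul hg) (hf.abs.integrable_mul hg.abs)
          fun x => (abs_mul (f x) (g x)).symm ▸ le_abs_self _
    _ ≤ (∫ x, |f x| ^ (2 : ℝ) ∂μ) ^ (1 / 2 : ℝ) * (∫ x, |g x| ^ (2 : ℝ) ∂μ) ^ (1 / 2 : ℝ) :=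
        integral_mul_le_Lp_mul_Lq_of_nonneg .two_two (.of_forall fun _ => abs_nonneg _)
          (.of_forall fun _ => abs_nonneg _) hf' hg'
    _ = √(∫ x, f x ^ 2 ∂μ) * √(∫ x, g x ^ 2 ∂μ) := by
        simp only [Real.rpow_two, sq_abs, Real.sqrt_eq_rpow]

lemma abs_integral_sq_sub_integral_sq_le {f g h : α → ℝ} (hf : MemLp f 2 μ) (hg : MemLp g 2 μ)
    (hh : MemLp h 2 μ) (hfg : ∀ x, |f x - g x| ≤ |h x|) :
    |(∫ x, f x ^ 2 ∂μ) - ∫ x, g x ^ 2 ∂μ| ≤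
      √(∫ x, h x ^ 2 ∂μ) * (√(∫ x, f x ^ 2 ∂μ) + √(∫ x, g x ^ 2 ∂μ)) := by
  have ihf : Integrable (fun x => |h x| * |f x|) μ := hh.abs.integrable_mul hf.abs
  have ihg : Integrable (fun x => |h x| * |g x|) μ := hh.abs.integrable_mul hg.abs
  have hhf := integral_mul_le_sqrt_mul_sqrt hh.abs hf.abs
  have hhg := integral_mul_le_sqrt_mul_sqrt hh.abs hg.abs
  simp only [Pi.abs_apply, sq_abs] at hhf hhg
  rw [← integral_sub (hf.integrable_sq (μ := μ)) hg.integrable_sq]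
  calc |∫ x, f x ^ 2 - g x ^ 2 ∂μ| ≤ ∫ x, |h x| * |f x| + |h x| * |g x| ∂μ := by
        rw [← Real.norm_eq_abs]
        refine norm_integral_le_of_norm_le (ihf.add ihg) (.of_forall fun x => ?_)
        rw [Real.norm_eq_abs, sq_sub_sq, abs_mul, ← mul_add, mul_comm]
        exact mul_le_mul (hfg x) (abs_add_le _ _) (abs_nonneg _) (abs_nonneg _)
    _ ≤ _ := by
        rw [integral_add ihf ihg, mul_add]
        exact add_le_add hhf hhg

variable {w D : α → ℝ} {p : ℝ}

lemma memLp_two_rpow_half (hw : AEStronglyMeasurable w μ)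
    (hwp : Integrable (fun x => |w x| ^ p) μ) : MemLp (fun x => |w x| ^ (p / 2)) 2 μ := by
  refine (memLp_two_iff_integrable_sq (hw.aemeasurable.abs.pow_const _).aestronglyMeasurable).2 ?_
  simpa only [rpow_mul_half_sq (abs_nonneg _)] using hwp

lemma memLp_two_rpow_half_sub_one_mul (hw : AEStronglyMeasurable w μ)
    (hD : AEStronglyMeasurable D μ) (hQ : Integrable (fun x => |w x| ^ (p - 2) * D x ^ 2) μ) :
    MemLp (fun x => |w x| ^ (p / 2 - 1) * |D x|) 2 μ := by
  refine (memLp_two_iff_integrable_sq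
    ((hw.aemeasurable.abs.pow_const _).aestronglyMeasurable.mul (by fun_prop))).2 ?_
  simpa only [Pi.mul_apply, rpow_half_sub_one_mul_abs_sq] using hQ

lemma integrable_rpow_sub_one_mul (hp : p ≠ 1) (hw : AEStronglyMeasurable w μ)
    (hD : AEStronglyMeasurable D μ) (hwp : Integrable (fun x => |w x| ^ p) μ)
    (hQ : Integrable (fun x => |w x| ^ (p - 2) * D x ^ 2) μ) :
    Integrable (fun x => |w x| ^ (p - 1) * |D x|) μ := by
  refine ((memLp_two_rpow_half_sub_one_mul hw hD hQ).integrable_mul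
    (memLp_two_rpow_half hw hwp)).congr (.of_forall fun x => ?_)
  exact (rpow_sub_one_mul_eq hp).symm

lemma integral_rpow_sub_one_mul_le (hp : p ≠ 1) (hw : AEStronglyMeasurable w μ)
    (hD : AEStronglyMeasurable D μ) (hwp : Integrable (fun x => |w x| ^ p) μ)
    (hQ : Integrable (fun x => |w x| ^ (p - 2) * D x ^ 2) μ) :
    ∫ x, |w x| ^ (p - 1) * |D x| ∂μ ≤
      √(∫ x, |w x| ^ (p - 2) * D x ^ 2 ∂μ) * √(∫ x, |w x| ^ p ∂μ) := by
  have := integral_mul_le_sqrt_mul_sqrt (memLp_two_rpow_half_sub_one_mul hw hD hQ)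
    (memLp_two_rpow_half hw hwp)
  simpa only [← rpow_sub_one_mul_eq hp, rpow_half_sub_one_mul_abs_sq,
    rpow_mul_half_sq (abs_nonneg _)] using this

lemma abs_integral_rpow_sub_integral_rpow_le {u v : α → ℝ} (hp : 1 < p)
    (hu : AEStronglyMeasurable u μ) (hv : AEStronglyMeasurable v μ)
    (hup : Integrable (fun x => |u x| ^ p) μ) (hvp : Integrable (fun x => |v x| ^ p) μ)
    (hQu : Integrable (fun x => |u x| ^ (p - 2) * (u x - v x) ^ 2) μ)
    (hQv : Integrable (fun x => |v x| ^ (p - 2) * (u x - v x) ^ 2) μ) :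
    |(∫ x, |u x| ^ p ∂μ) - ∫ x, |v x| ^ p ∂μ| ≤
      p * (√(∫ x, |u x| ^ (p - 2) * (u x - v x) ^ 2 ∂μ) * √(∫ x, |u x| ^ p ∂μ) +
        √(∫ x, |v x| ^ (p - 2) * (u x - v x) ^ 2 ∂μ) * √(∫ x, |v x| ^ p ∂μ)) := by
  have hD : AEStronglyMeasurable (fun x => u x - v x) μ := hu.sub hv
  have iu := integrable_rpow_sub_one_mul hp.ne' hu hD hup hQu
  have iv := integrable_rpow_sub_one_mul hp.ne' hv hD hvp hQv
  rw [← integral_sub hup hvp, ← Real.norm_eq_abs]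
  calc ‖∫ x, |u x| ^ p - |v x| ^ p ∂μ‖
      ≤ ∫ x, p * (|u x| ^ (p - 1) * |u x - v x| + |v x| ^ (p - 1) * |u x - v x|) ∂μ := by
        refine norm_integral_le_of_norm_le ((iu.add iv).const_mul p) (.of_forall fun x => ?_)
        rw [Real.norm_eq_abs, ← add_mul, ← mul_assoc]
        exact abs_rpow_abs_sub_rpow_abs_le hp.le
    _ = p * ((∫ x, |u x| ^ (p - 1) * |u x - v x| ∂μ) +
          ∫ x, |v x| ^ (p - 1) * |u x - v x| ∂μ) := by
        rw [integral_const_mul, integral_add iu iv]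
    _ ≤ _ := by
        gcongr
        · exact integral_rpow_sub_one_mul_le hp.ne' hu hD hup hQu
        · exact integral_rpow_sub_one_mul_le hp.ne' hv hD hvp hQv

lemma mul_integral_mul_sub_sub_mul_integral_mul_sub {u v : α → ℝ} (hu : MemLp u 2 μ)
    (hv : MemLp v 2 μ) (a b : ℝ) :
    a * (∫ x, u x * (u x - v x) ∂μ) - b * (∫ x, v x * (u x - v x) ∂μ) =
      ((a - b) * ((∫ x, u x ^ 2 ∂μ) - ∫ x, v x ^ 2 ∂μ) +
        (a + b) * ∫ x, (u x - v x) ^ 2 ∂μ) / 2 := by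
  have iu := hu.integrable_sq
  have iv := hv.integrable_sq
  have iuv : Integrable (fun x => u x * v x) μ := hu.integrable_mul hv
  have h1 : ∫ x, u x * (u x - v x) ∂μ = (∫ x, u x ^ 2 ∂μ) - ∫ x, u x * v x ∂μ := by
    rw [← integral_sub iu iuv]; congr 1; ext x; ring
  have h2 : ∫ x, v x * (u x - v x) ∂μ = (∫ x, u x * v x ∂μ) - ∫ x, v x ^ 2 ∂μ := by
    rw [← integral_sub iuv iv]; congr 1; ext x; ring
  have h3 : ∫ x, (u x - v x) ^ 2 ∂μ =
      (∫ x, u x ^ 2 ∂μ) - 2 * (∫ x, u x * v x ∂μ) + ∫ x, v x ^ 2 ∂μ := by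
    have i2 : Integrable (fun x => u x ^ 2 - 2 * (u x * v x)) μ := iu.sub (iuv.const_mul 2)
    rw [← integral_const_mul, ← integral_sub iu (iuv.const_mul 2), ← integral_add i2 iv]
    congr 1; ext x; ring
  rw [h1, h2, h3]
  ring

lemma memLp_ofReal_of_integrable_abs_rpow (hp : 0 < p) (hw : AEStronglyMeasurable w μ)
    (hwp : Integrable (fun x => |w x| ^ p) μ) : MemLp w (ENNReal.ofReal p) μ := by
  rw [← integrable_norm_rpow_iff hw (by simpa using hp) ENNReal.ofReal_ne_top,
    ENNReal.toReal_ofReal hp.le]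
  simpa only [Real.norm_eq_abs] using hwp

lemma integrable_abs_sub_rpow {u v : α → ℝ} (hp : 0 < p) (hu : AEStronglyMeasurable u μ)
    (hv : AEStronglyMeasurable v μ) (hup : Integrable (fun x => |u x| ^ p) μ)
    (hvp : Integrable (fun x => |v x| ^ p) μ) :
    Integrable (fun x => |u x - v x| ^ p) μ := by
  have := ((memLp_ofReal_of_integrable_abs_rpow hp hu hup).sub
    (memLp_ofReal_of_integrable_abs_rpow hp hv hvp)).integrable_norm_rpow
    (by simpa using hp) ENNReal.ofReal_ne_top
  simpa only [ENNReal.toReal_ofReal hp.le, Pi.sub_apply, Real.norm_eq_abs] using this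

lemma integrable_rpow_sub_two_mul_sq (hp : 2 ≤ p) (hw : AEStronglyMeasurable w μ)
    (hD : AEStronglyMeasurable D μ) (hwp : Integrable (fun x => |w x| ^ p) μ)
    (hDp : Integrable (fun x => |D x| ^ p) μ) :
    Integrable (fun x => |w x| ^ (p - 2) * D x ^ 2) μ := by
  refine (hwp.add hDp).mono' ((hw.aemeasurable.abs.pow_const _).aestronglyMeasurable.mul
    (by fun_prop)) (.of_forall fun x => ?_)
  rw [Real.norm_of_nonneg (by positivity), Pi.add_apply, ← sq_abs]
  simpa only [sub_add_cancel, Real.rpow_two] using rpow_mul_rpow_le_rpow_add_rpow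
    (abs_nonneg (w x)) (abs_nonneg (D x)) (by linarith : 0 ≤ p - 2) zero_le_two (by linarith)

end L2

section Gradient

variable {F : Type*} [NormedAddCommGroup F] [InnerProductSpace ℝ F] [CompleteSpace F]
  {u v : F → ℝ}

lemma gradient_sub {x : F} (hu : DifferentiableAt ℝ u x) (hv : DifferentiableAt ℝ v x) :
    gradient (u - v) x = gradient u x - gradient v x := by
  simp only [gradient, fderiv_sub hu hv, map_sub]

variable [MeasurableSpace F] [BorelSpace F] [SecondCountableTopology F] {μ : Measure F}

lemma memLp_two_gradient (hu : Integrable (fun x => ‖gradient u x‖ ^ 2) μ) :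
    MemLp (gradient u) 2 μ :=
  (memLp_two_iff_integrable_sq_norm
    ((InnerProductSpace.toDual ℝ F).symm.continuous.measurable.comp
      (measurable_fderiv ℝ u)).aestronglyMeasurable).2 hu

lemma abs_integral_norm_gradient_sq_sub_le (hu : Differentiable ℝ u) (hv : Differentiable ℝ v)
    (hgu : Integrable (fun x => ‖gradient u x‖ ^ 2) μ)
    (hgv : Integrable (fun x => ‖gradient v x‖ ^ 2) μ) :
    |(∫ x, ‖gradient u x‖ ^ 2 ∂μ) - ∫ x, ‖gradient v x‖ ^ 2 ∂μ| ≤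
      √(∫ x, ‖gradient (u - v) x‖ ^ 2 ∂μ) *
        (√(∫ x, ‖gradient u x‖ ^ 2 ∂μ) + √(∫ x, ‖gradient v x‖ ^ 2 ∂μ)) := by
  have mgu := memLp_two_gradient hgu
  have mgv := memLp_two_gradient hgv
  rw [show gradient (u - v) = gradient u - gradient v from
    funext fun x => gradient_sub (hu x) (hv x)]
  exact abs_integral_sq_sub_integral_sq_le mgu.norm mgv.norm (mgu.sub mgv).norm
    fun x => (abs_norm_sub_norm_le _ _).trans_eq (abs_norm _).symm

end Gradient

lemma mul_mul_add_le_two_mul_sq_mul_sq {K x y : ℝ} (hK : 0 ≤ K)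
    (hKx : K ≤ x ^ 2) (hKy : K ≤ y ^ 2) : K * (x * (x + y)) ≤ 2 * (x ^ 2 * y ^ 2) := by
  nlinarith [mul_le_mul_of_nonneg_left hKy (sq_nonneg x),
    mul_le_mul_of_nonneg_left hKx (sq_nonneg y), mul_nonneg hK (sq_nonneg (x - y))]

/-- Here `x ^ 2` and `y ^ 2` stand for `max (E + P) K` of `u` and `v`: the factors `x`, `y`
produced by the bounds on the differences cancel against the denominator `x ^ 2 * y ^ 2` of the
cut-off estimate. -/
lemma mul_le_of_mul_sq_mul_sq_le {K l c N x y p g n qu qv : ℝ} (hK : 0 < K) (hl : 0 < l)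
    (hKx : K ≤ x ^ 2) (hKy : K ≤ y ^ 2) (hp : 0 ≤ p) (hg : 0 ≤ g) (hn : 0 ≤ n)
    (hqu : 0 ≤ qu) (hqv : 0 ≤ qv) (hc : 0 ≤ c) (hN : 0 ≤ N)
    (hcxy : c * (x ^ 2 * y ^ 2) ≤ K ^ 2 * (g * (x + y) + p * (qu * x + qv * y)))
    (hlN : l * N ≤ n * (x + y)) :
    c * N ≤ K / l * n * (4 * g + 2 * p * (qu + qv)) := by
  have hx := mul_mul_add_le_two_mul_sq_mul_sq hK.le hKx hKy
  have hy : K * (y * (x + y)) ≤ 2 * (x ^ 2 * y ^ 2) := by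
    rw [add_comm x, mul_comm (x ^ 2)]
    exact mul_mul_add_le_two_mul_sq_mul_sq hK.le hKy hKx
  have hxy : 0 < l * (x ^ 2 * y ^ 2) := by
    have : 0 < x ^ 2 := hK.trans_le hKx
    have : 0 < y ^ 2 := hK.trans_le hKy
    positivity
  refine le_of_mul_le_mul_left ?_ hxy
  calc l * (x ^ 2 * y ^ 2) * (c * N) = (c * (x ^ 2 * y ^ 2)) * (l * N) := by ring
    _ ≤ K ^ 2 * (g * (x + y) + p * (qu * x + qv * y)) * (n * (x + y)) :=
        mul_le_mul hcxy hlN (by positivity) ((mul_nonneg hc (by positivity)).trans hcxy)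
    _ = K * n * (g * (K * (x * (x + y)) + K * (y * (x + y))) +
          p * (qu * (K * (x * (x + y))) + qv * (K * (y * (x + y))))) := by ring
    _ ≤ K * n * (g * (2 * (x ^ 2 * y ^ 2) + 2 * (x ^ 2 * y ^ 2)) +
          p * (qu * (2 * (x ^ 2 * y ^ 2)) + qv * (2 * (x ^ 2 * y ^ 2)))) := by gcongr
    _ = l * (x ^ 2 * y ^ 2) * (K / l * n * (4 * g + 2 * p * (qu + qv))) := by
        field_simp
        ring

section Algebra

variable {K lam p Eu Ev Pu Pv Nu Nv Gd ND Qu Qv : ℝ}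

lemma abs_cutoff_sub_mul_abs_sub_le (hK : 0 < K) (hlam : 0 < lam) (hp : 0 ≤ p)
    (hEu : 0 ≤ Eu) (hEv : 0 ≤ Ev) (hPu : 0 ≤ Pu) (hPv : 0 ≤ Pv)
    (hE : |Eu - Ev| ≤ √Gd * (√Eu + √Ev)) (hP : |Pu - Pv| ≤ p * (√Qu * √Pu + √Qv * √Pv))
    (hN : |Nu - Nv| ≤ √ND * (√Nu + √Nv)) (hNu : lam * Nu ≤ Eu) (hNv : lam * Nv ≤ Ev) :
    |cutoff K (Eu + Pu) - cutoff K (Ev + Pv)| * |Nu - Nv| ≤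
      K / √lam * √ND * (4 * √Gd + 2 * p * (√Qu + √Qv)) := by
  set x := √(max (Eu + Pu) K)
  set y := √(max (Ev + Pv) K)
  have hx2 : x ^ 2 = max (Eu + Pu) K := Real.sq_sqrt (hK.le.trans (le_max_right _ _))
  have hy2 : y ^ 2 = max (Ev + Pv) K := Real.sq_sqrt (hK.le.trans (le_max_right _ _))
  have hxE : √Eu ≤ x := Real.sqrt_le_sqrt (by linarith [le_max_left (Eu + Pu) K])
  have hyE : √Ev ≤ y := Real.sqrt_le_sqrt (by linarith [le_max_left (Ev + Pv) K])
  have hxP : √Pu ≤ x := Real.sqrt_le_sqrt (by linarith [le_max_left (Eu + Pu) K])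
  have hyP : √Pv ≤ y := Real.sqrt_le_sqrt (by linarith [le_max_left (Ev + Pv) K])
  have hxN : √lam * √Nu ≤ x := (Real.sqrt_mul hlam.le Nu ▸ Real.sqrt_le_sqrt hNu).trans hxE
  have hyN : √lam * √Nv ≤ y := (Real.sqrt_mul hlam.le Nv ▸ Real.sqrt_le_sqrt hNv).trans hyE
  have hcut : |cutoff K (Eu + Pu) - cutoff K (Ev + Pv)| * (x ^ 2 * y ^ 2) ≤
      K ^ 2 * (√Gd * (x + y) + p * (√Qu * x + √Qv * y)) := by
    rw [hx2, hy2]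
    refine (abs_cutoff_sub_cutoff_mul_le hK (by positivity) (by positivity)).trans ?_
    gcongr
    calc |Eu + Pu - (Ev + Pv)| ≤ |Eu - Ev| + |Pu - Pv| := by
          rw [add_sub_add_comm]; exact abs_add_le _ _
      _ ≤ _ := by
          gcongr
          · exact hE.trans (by gcongr)
          · exact hP.trans (by gcongr)
  have hNxy : √lam * |Nu - Nv| ≤ √ND * (x + y) := by
    calc √lam * |Nu - Nv| ≤ √lam * (√ND * (√Nu + √Nv)) := by gcongr
      _ = √ND * (√lam * √Nu + √lam * √Nv) := by ring
      _ ≤ √ND * (x + y) := by gcongr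
  exact mul_le_of_mul_sq_mul_sq_le hK (Real.sqrt_pos.2 hlam) (hx2 ▸ le_max_right _ _)
    (hy2 ▸ le_max_right _ _) hp (Real.sqrt_nonneg _) (Real.sqrt_nonneg _) (Real.sqrt_nonneg _)
    (Real.sqrt_nonneg _) (abs_nonneg _) (abs_nonneg _) hcut hNxy

lemma cutoff_sub_mul_sub_add_cutoff_add_mul_le (hK : 0 < K) (hlam : 0 < lam) (hp : 0 ≤ p)
    (hEu : 0 ≤ Eu) (hEv : 0 ≤ Ev) (hPu : 0 ≤ Pu) (hPv : 0 ≤ Pv)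
    (hGd : 0 ≤ Gd) (hND : 0 ≤ ND) (hQu : 0 ≤ Qu) (hQv : 0 ≤ Qv)
    (hE : |Eu - Ev| ≤ √Gd * (√Eu + √Ev)) (hP : |Pu - Pv| ≤ p * (√Qu * √Pu + √Qv * √Pv))
    (hN : |Nu - Nv| ≤ √ND * (√Nu + √Nv)) (hNu : lam * Nu ≤ Eu) (hNv : lam * Nv ≤ Ev) :
    ((cutoff K (Eu + Pu) - cutoff K (Ev + Pv)) * (Nu - Nv) +
        (cutoff K (Eu + Pu) + cutoff K (Ev + Pv)) * ND) / 2 ≤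
      1 / 2 * Gd + (1 + (2 + p ^ 2 * 2) * K * lam⁻¹) * K * ND + 1 / 4 * (Qu + Qv) := by
  set m := K / √lam * √ND
  have hm : m ^ 2 = K ^ 2 * lam⁻¹ * ND := by
    rw [mul_pow, div_pow, Real.sq_sqrt hlam.le, Real.sq_sqrt hND, div_eq_mul_inv]
  have hsub : (cutoff K (Eu + Pu) - cutoff K (Ev + Pv)) * (Nu - Nv) ≤
      Gd + 4 * (1 + p ^ 2) * m ^ 2 + (Qu + Qv) / 2 := by
    calc (cutoff K (Eu + Pu) - cutoff K (Ev + Pv)) * (Nu - Nv)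
        ≤ |cutoff K (Eu + Pu) - cutoff K (Ev + Pv)| * |Nu - Nv| := by
          rw [← abs_mul]; exact le_abs_self _
      _ ≤ m * (4 * √Gd + 2 * p * (√Qu + √Qv)) :=
          abs_cutoff_sub_mul_abs_sub_le hK hlam hp hEu hEv hPu hPv hE hP hN hNu hNv
      _ ≤ √Gd ^ 2 + 4 * (1 + p ^ 2) * m ^ 2 + (√Qu ^ 2 + √Qv ^ 2) / 2 := by
          nlinarith [sq_nonneg (√Gd - 2 * m), sq_nonneg (√Qu - 2 * p * m),
            sq_nonneg (√Qv - 2 * p * m)]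
      _ = _ := by rw [Real.sq_sqrt hGd, Real.sq_sqrt hQu, Real.sq_sqrt hQv]
  have hadd : (cutoff K (Eu + Pu) + cutoff K (Ev + Pv)) * ND ≤ 2 * K * ND := by
    nlinarith [cutoff_le (s := Eu + Pu) hK, cutoff_le (s := Ev + Pv) hK]
  rw [hm] at hsub
  linear_combination (hsub + hadd) / 2

end Algebra

theorem stmt_2_general (d : ℕ)
    (𝒪 : Set (EuclideanSpace ℝ (Fin d)))
    (p K lam : ℝ) (hp : 2 ≤ p) (hK : 0 < K) (hlam : 0 < lam)
    (u v : EuclideanSpace ℝ (Fin d) → ℝ)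
    (hu : Differentiable ℝ u) (hv : Differentiable ℝ v)
    (hu2 : IntegrableOn (fun x => (u x) ^ 2) 𝒪)
    (hv2 : IntegrableOn (fun x => (v x) ^ 2) 𝒪)
    (hgu2 : IntegrableOn (fun x => ‖gradient u x‖ ^ 2) 𝒪)
    (hgv2 : IntegrableOn (fun x => ‖gradient v x‖ ^ 2) 𝒪)
    (hup : IntegrableOn (fun x => |u x| ^ p) 𝒪)
    (hvp : IntegrableOn (fun x => |v x| ^ p) 𝒪)
    (hPoincare : ∀ w : EuclideanSpace ℝ (Fin d) → ℝ,
      w = u ∨ w = v ∨ w = u - v →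
      lam * ∫ x in 𝒪, (w x) ^ 2 ≤ ∫ x in 𝒪, ‖gradient w x‖ ^ 2) :
    cutoffCoeff 𝒪 p K u * (∫ x in 𝒪, u x * (u x - v x))
      - cutoffCoeff 𝒪 p K v * (∫ x in 𝒪, v x * (u x - v x))
    ≤ (1 / 2) * (∫ x in 𝒪, ‖gradient (u - v) x‖ ^ 2)
      + ((1 + (2 + p ^ 2 * (2 : ℝ) ^ (2 * p - 3)) * K * lam⁻¹) * K)
          * (∫ x in 𝒪, (u x - v x) ^ 2)
      + (1 / 4) * ((∫ x in 𝒪, |u x| ^ (p - 2) * (u x - v x) ^ 2)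
          + (∫ x in 𝒪, |v x| ^ (p - 2) * (u x - v x) ^ 2)) := by
  have hu' : AEStronglyMeasurable u (volume.restrict 𝒪) := hu.continuous.aestronglyMeasurable
  have hv' : AEStronglyMeasurable v (volume.restrict 𝒪) := hv.continuous.aestronglyMeasurable
  have mu : MemLp u 2 (volume.restrict 𝒪) := (memLp_two_iff_integrable_sq hu').2 hu2
  have mv : MemLp v 2 (volume.restrict 𝒪) := (memLp_two_iff_integrable_sq hv').2 hv2
  have mD : MemLp (fun x => u x - v x) 2 (volume.restrict 𝒪) := mu.sub mv
  have hD : AEStronglyMeasurable (fun x => u x - v x) (volume.restrict 𝒪) := hu'.sub hv'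
  have hDp := integrable_abs_sub_rpow (by linarith) hu' hv' hup hvp
  have hQu := integrable_rpow_sub_two_mul_sq hp hu' hD hup hDp
  have hQv := integrable_rpow_sub_two_mul_sq hp hv' hD hvp hDp
  have hE := abs_integral_norm_gradient_sq_sub_le hu hv hgu2 hgv2
  have hN := abs_integral_sq_sub_integral_sq_le mu mv mD fun x => le_rfl
  have hP := abs_integral_rpow_sub_integral_rpow_le (by linarith) hu' hv' hup hvp hQu hQv
  rw [mul_integral_mul_sub_sub_mul_integral_mul_sub mu mv, cutoffCoeff_eq_cutoff,
    cutoffCoeff_eq_cutoff]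
  refine (cutoff_sub_mul_sub_add_cutoff_add_mul_le hK hlam (by linarith) (by positivity)
    (by positivity) (by positivity) (by positivity) (by positivity) (by positivity)
    (by positivity) (by positivity) hE hP hN (hPoincare u (.inl rfl))
    (hPoincare v (.inr (.inl rfl)))).trans ?_
  gcongr
  simpa using Real.rpow_le_rpow_of_exponent_le one_le_two (show (1 : ℝ) ≤ 2 * p - 3 by linarith)

theorem stmt_2 (d : ℕ) (hd : 1 ≤ d)
    (𝒪 : Set (EuclideanSpace ℝ (Fin d))) (h𝒪 : IsOpen 𝒪)
    (p K lam : ℝ) (hp : 2 ≤ p) (hK : 0 < K) (hlam : 0 < lam)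
    (u v : EuclideanSpace ℝ (Fin d) → ℝ)
    (hu : Differentiable ℝ u) (hv : Differentiable ℝ v)
    (hu2 : IntegrableOn (fun x => (u x) ^ 2) 𝒪)
    (hv2 : IntegrableOn (fun x => (v x) ^ 2) 𝒪)
    (hgu2 : IntegrableOn (fun x => ‖gradient u x‖ ^ 2) 𝒪)
    (hgv2 : IntegrableOn (fun x => ‖gradient v x‖ ^ 2) 𝒪)
    (hup : IntegrableOn (fun x => |u x| ^ p) 𝒪)
    (hvp : IntegrableOn (fun x => |v x| ^ p) 𝒪)
    (hPoincare : ∀ w : EuclideanSpace ℝ (Fin d) → ℝ,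
      w = u ∨ w = v ∨ w = u - v →
      lam * ∫ x in 𝒪, (w x) ^ 2 ≤ ∫ x in 𝒪, ‖gradient w x‖ ^ 2) :
    cutoffCoeff 𝒪 p K u * (∫ x in 𝒪, u x * (u x - v x))
      - cutoffCoeff 𝒪 p K v * (∫ x in 𝒪, v x * (u x - v x))
    ≤ (1 / 2) * (∫ x in 𝒪, ‖gradient (u - v) x‖ ^ 2)
      + ((1 + (2 + p ^ 2 * (2 : ℝ) ^ (2 * p - 3)) * K * lam⁻¹) * K)
          * (∫ x in 𝒪, (u x - v x) ^ 2)
      + (1 / 4) * ((∫ x in 𝒪, |u x| ^ (p - 2) * (u x - v x) ^ 2)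
          + (∫ x in 𝒪, |v x| ^ (p - 2) * (u x - v x) ^ 2)) :=
  stmt_2_general d 𝒪 p K lam hp hK hlam u v hu hv hu2 hv2 hgu2 hgv2 hup hvp hPoincare
end

section
/- Let E be a real inner product space and let A : E → E be a linear map. Then for every μ > 0 and all y, u ∈ E satisfying μ y + A y = μ u, one has ⟨A(A y), A y⟩ ≤ (μ/4) ‖A u‖². -/
/-! The resolvent estimate `⟪A z, z⟫ ≤ ‖μ z + A z‖² / (4μ)`, applied to `z = A y`: applying `A`
to `μ y + A y = μ u` gives `μ z + A z = μ A u`. -/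

open scoped RealInnerProductSpace

section

variable {E : Type*} [NormedAddCommGroup E] [InnerProductSpace ℝ E]

theorem four_mul_inner_le_norm_add_sq (x y : E) : 4 * ⟪x, y⟫ ≤ ‖x + y‖ ^ 2 := by
  have hadd := norm_add_sq_real x y
  have hsub := norm_sub_sq_real x y
  linarith [sq_nonneg ‖x - y‖]

theorem inner_le_norm_smul_add_sq_div {μ : ℝ} (hμ : 0 < μ) (z w : E) :
    ⟪w, z⟫ ≤ ‖μ • z + w‖ ^ 2 / (4 * μ) := by
  have h := four_mul_inner_le_norm_add_sq (μ • z) w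
  rw [real_inner_smul_left, real_inner_comm] at h
  rw [le_div_iff₀ (by positivity)]
  linarith

end

theorem stmt_8 {E : Type*} [NormedAddCommGroup E] [InnerProductSpace ℝ E]
    (A : E →ₗ[ℝ] E)
    (μ : ℝ) (hμ : 0 < μ) (y u : E) (h : μ • y + A y = μ • u) :
    (inner ℝ (A (A y)) (A y) : ℝ) ≤ (μ / 4) * ‖A u‖ ^ 2 := by
  have hAy : μ • A y + A (A y) = μ • A u := by
    simpa only [map_add, map_smul] using congrArg A h
  calc ⟪A (A y), A y⟫ ≤ ‖μ • A y + A (A y)‖ ^ 2 / (4 * μ) :=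
        inner_le_norm_smul_add_sq_div hμ (A y) (A (A y))
    _ = μ / 4 * ‖A u‖ ^ 2 := by
      rw [hAy, norm_smul, Real.norm_of_nonneg hμ.le]
      field_simp
end

section
/- Let (X, 𝒜, μ) be a measure space, let p ≥ 2 be a real number, and let u, v : X → ℝ be measurable functions with ∫|u|^p dμ < ∞ and ∫|v|^p dμ < ∞. Then ∫ (|u|^{p−2}u − |v|^{p−2}v)(u − v) dμ ≥ (1/2) ∫ |u|^{p−2}(u − v)² dμ + (1/2) ∫ |v|^{p−2}(u − v)² dμ. -/
/-!
Pointwise, with `A = |a| ^ (p - 2)` and `B = |b| ^ (p - 2)`,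
`(A a - B b)(a - b) - (A + B)(a - b)² / 2 = (A - B)(a² - b²) / 2`, which is nonnegative because
`t ↦ t ^ (p - 2)` is monotone on `[0, ∞)`, so both factors have the sign of `|a| - |b|`.
All three integrands are nonnegative and bounded by `4 (|u| ^ p + |v| ^ p)`, so they are
integrable and the pointwise inequality integrates.
-/

open MeasureTheory

section Pointwise

variable {p : ℝ}

lemma rpow_sub_two_mul_sq {x : ℝ} (hp : p ≠ 0) (hx : 0 ≤ x) : x ^ (p - 2) * x ^ 2 = x ^ p := by
  rw [← Real.rpow_add_natCast' hx (by simpa using hp)]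
  norm_num

lemma rpow_sub_two_mul_sq_le {x y : ℝ} (hp : 2 ≤ p) (hx : 0 ≤ x) (hy : 0 ≤ y) :
    x ^ (p - 2) * y ^ 2 ≤ x ^ p + y ^ p := by
  rcases le_total x y with hxy | hyx
  · calc x ^ (p - 2) * y ^ 2 ≤ y ^ (p - 2) * y ^ 2 := by
          gcongr
      _ = y ^ p := rpow_sub_two_mul_sq (by linarith) hy
      _ ≤ x ^ p + y ^ p := le_add_of_nonneg_left (Real.rpow_nonneg hx p)
  · calc x ^ (p - 2) * y ^ 2 ≤ x ^ (p - 2) * x ^ 2 := by gcongr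
      _ = x ^ p := rpow_sub_two_mul_sq (by linarith) hx
      _ ≤ x ^ p + y ^ p := le_add_of_nonneg_right (Real.rpow_nonneg hy p)

lemma abs_rpow_mul_sub_sq_le (hp : 2 ≤ p) (a b : ℝ) :
    |a| ^ (p - 2) * (a - b) ^ 2 ≤ 4 * (|a| ^ p + |b| ^ p) := by
  have hA : 0 ≤ |a| ^ (p - 2) := by positivity
  have haa := rpow_sub_two_mul_sq (by linarith) (abs_nonneg a) (p := p)
  have hab := rpow_sub_two_mul_sq_le hp (abs_nonneg a) (abs_nonneg b)
  rw [sq_abs] at haa hab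
  nlinarith [mul_nonneg hA (sq_nonneg (a + b)), Real.rpow_nonneg (abs_nonneg b) p]

lemma abs_rpow_sub_abs_rpow_mul_sq_sub_sq_nonneg (hp : 2 ≤ p) (a b : ℝ) :
    0 ≤ (|a| ^ (p - 2) - |b| ^ (p - 2)) * (a ^ 2 - b ^ 2) := by
  rcases le_total |a| |b| with hab | hba
  · refine mul_nonneg_of_nonpos_of_nonpos ?_ (sub_nonpos.2 (sq_le_sq.2 hab))
    exact sub_nonpos.2 (Real.rpow_le_rpow (abs_nonneg a) hab (by linarith))
  · refine mul_nonneg ?_ (sub_nonneg.2 (sq_le_sq.2 hba))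
    exact sub_nonneg.2 (Real.rpow_le_rpow (abs_nonneg b) hba (by linarith))

lemma half_abs_rpow_mul_sub_sq_add_le (hp : 2 ≤ p) (a b : ℝ) :
    1 / 2 * (|a| ^ (p - 2) * (a - b) ^ 2) + 1 / 2 * (|b| ^ (p - 2) * (a - b) ^ 2)
      ≤ (|a| ^ (p - 2) * a - |b| ^ (p - 2) * b) * (a - b) := by
  linear_combination (1 / 2) * abs_rpow_sub_abs_rpow_mul_sq_sub_sq_nonneg hp a b

lemma abs_rpow_mul_sub_mul_sub_le (hp : 2 ≤ p) (a b : ℝ) :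
    (|a| ^ (p - 2) * a - |b| ^ (p - 2) * b) * (a - b) ≤ 4 * (|a| ^ p + |b| ^ p) := by
  have hA : 0 ≤ |a| ^ (p - 2) := by positivity
  have hB : 0 ≤ |b| ^ (p - 2) := by positivity
  have haa := rpow_sub_two_mul_sq (by linarith) (abs_nonneg a) (p := p)
  have hbb := rpow_sub_two_mul_sq (by linarith) (abs_nonneg b) (p := p)
  have hab := rpow_sub_two_mul_sq_le hp (abs_nonneg a) (abs_nonneg b)
  have hba := rpow_sub_two_mul_sq_le hp (abs_nonneg b) (abs_nonneg a)
  rw [sq_abs] at haa hbb hab hba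
  nlinarith [mul_nonneg hA (sq_nonneg (a + b)), mul_nonneg hB (sq_nonneg (a + b))]

end Pointwise

theorem stmt_12 {X : Type*} [MeasurableSpace X] (μ : Measure X)
    (p : ℝ) (hp : 2 ≤ p) (u v : X → ℝ)
    (hu : Measurable u) (hv : Measurable v)
    (hup : Integrable (fun x => |u x| ^ p) μ)
    (hvp : Integrable (fun x => |v x| ^ p) μ) :
    (1 / 2) * (∫ x, |u x| ^ (p - 2) * (u x - v x) ^ 2 ∂μ)
      + (1 / 2) * (∫ x, |v x| ^ (p - 2) * (u x - v x) ^ 2 ∂μ)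
    ≤ ∫ x, (|u x| ^ (p - 2) * u x - |v x| ^ (p - 2) * v x) * (u x - v x) ∂μ := by
  have hdom : Integrable (fun x => 4 * (|u x| ^ p + |v x| ^ p)) μ := (hup.add hvp).const_mul 4
  have hint_u : Integrable (fun x => |u x| ^ (p - 2) * (u x - v x) ^ 2) μ :=
    integrable_of_le_of_le (g₁ := 0) (by fun_prop) (ae_of_all _ fun x => by positivity)
      (ae_of_all _ fun x => abs_rpow_mul_sub_sq_le hp (u x) (v x)) (integrable_zero _ _ _) hdom
  have hint_v : Integrable (fun x => |v x| ^ (p - 2) * (u x - v x) ^ 2) μ :=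
    integrable_of_le_of_le (g₁ := 0) (by fun_prop) (ae_of_all _ fun x => by positivity)
      (ae_of_all _ fun x => by
        simpa only [sub_sq_comm (v x), add_comm (|v x| ^ p)] using
          abs_rpow_mul_sub_sq_le hp (v x) (u x))
      (integrable_zero _ _ _) hdom
  have hint : Integrable
      (fun x => (|u x| ^ (p - 2) * u x - |v x| ^ (p - 2) * v x) * (u x - v x)) μ :=
    integrable_of_le_of_le (g₁ := 0) (by fun_prop)
      (ae_of_all _ fun x => le_trans (by positivity) (half_abs_rpow_mul_sub_sq_add_le hp (u x) (v x)))
      (ae_of_all _ fun x => abs_rpow_mul_sub_mul_sub_le hp (u x) (v x)) (integrable_zero _ _ _) hdom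
  rw [← integral_const_mul, ← integral_const_mul,
    ← integral_add (hint_u.const_mul _) (hint_v.const_mul _)]
  exact integral_mono ((hint_u.const_mul _).add (hint_v.const_mul _)) hint
    fun x => half_abs_rpow_mul_sub_sq_add_le hp (u x) (v x)
end

section
/- Let (X, 𝒜, μ) be a measure space, let p ≥ 2 be a real number, and let u, v : X → ℝ be measurable functions with ∫|u|^p dμ < ∞, ∫|v|^p dμ < ∞, ∫u² dμ < ∞ and ∫v² dμ < ∞. Write ‖w‖_{L^p}^p = ∫|w|^p dμ. Then ( ‖u‖_{L^p}^p − ‖v‖_{L^p}^p ) · ∫ v (u − v) dμ ≤ (1/4) ( ∫ |u|^{p−2}(u − v)² dμ + ∫ |v|^{p−2}(u − v)² dμ ) + p² · 2^{2p−4} · ( ‖u‖_{L^p}^p + ‖v‖_{L^p}^p ) · ( ∫ v² dμ ) · ( ∫ (u − v)² dμ ). -/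
/-! Pointwise, `||a|^p - |b|^p| ≤ p m^(p-1) |a - b|` with `m = max |a| |b|`. Splitting
`p m^(p-1) |a - b| |c| = m^(p-2) · |a - b| · (p m |c|)` and applying AM-GM to the last two factors
bounds `(|a|^p - |b|^p) c` by `¼ m^(p-2) (a - b)² + p² c² m^p`, and `m^q ≤ |a|^q + |b|^q`.
Integrating this with the constant `c = ∫ v (u - v)` and bounding `c² ≤ ∫ v² · ∫ (u - v)²` by
Cauchy-Schwarz gives the estimate with `p²` in place of `p² 2^(2p-4)`. -/

open MeasureTheory

namespace Real

theorem rpow_sub_rpow_le_mul_rpow_sub_one {p : ℝ} (hp : 1 ≤ p) {a b : ℝ} (hb : 0 ≤ b)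
    (hba : b ≤ a) : a ^ p - b ^ p ≤ p * a ^ (p - 1) * (a - b) := by
  obtain rfl | ha := (hb.trans hba).eq_or_lt
  · simp [le_antisymm hba hb, zero_rpow (by linarith : p ≠ 0)]
  have bernoulli := one_add_mul_self_le_rpow_one_add (s := b / a - 1) (by
    linarith [div_nonneg hb ha.le]) hp
  rw [add_sub_cancel, div_rpow hb ha.le, le_div_iff₀ (rpow_pos_of_pos ha p)] at bernoulli
  have hap : a ^ p = a ^ (p - 1) * a := by rw [← rpow_add_one ha.ne', sub_add_cancel]
  rw [hap] at bernoulli ⊢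
  have : a ^ (p - 1) * a * (b / a) = a ^ (p - 1) * b := by field_simp
  nlinarith

theorem abs_abs_rpow_sub_abs_rpow_le {p : ℝ} (hp : 1 ≤ p) (a b : ℝ) :
    |(|a| ^ p - |b| ^ p)| ≤ |a - b| * p * max |a| |b| ^ (p - 1) := by
  wlog hba : |b| ≤ |a| generalizing a b
  · rw [abs_sub_comm, abs_sub_comm a, max_comm]
    exact this b a (le_of_not_ge hba)
  rw [abs_of_nonneg (sub_nonneg.2 (rpow_le_rpow (abs_nonneg b) hba (by linarith))),
    max_eq_left hba]
  calc |a| ^ p - |b| ^ p ≤ p * |a| ^ (p - 1) * (|a| - |b|) :=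
        rpow_sub_rpow_le_mul_rpow_sub_one hp (abs_nonneg b) hba
    _ ≤ p * |a| ^ (p - 1) * |a - b| := by gcongr; exact abs_sub_abs_le_abs_sub a b
    _ = |a - b| * p * |a| ^ (p - 1) := by ring

theorem max_rpow_le_rpow_add_rpow {a b : ℝ} (ha : 0 ≤ a) (hb : 0 ≤ b) (q : ℝ) :
    max a b ^ q ≤ a ^ q + b ^ q := by
  rcases max_choice a b with h | h <;> rw [h]
  · exact le_add_of_nonneg_right (rpow_nonneg hb q)
  · exact le_add_of_nonneg_left (rpow_nonneg ha q)

theorem rpow_sub_two_mul_sq {p m : ℝ} (hp : 2 ≤ p) (hm : 0 ≤ m) :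
    m ^ (p - 2) * m ^ 2 = m ^ p := by
  rw [← rpow_natCast, ← rpow_add' hm (by norm_num; linarith)]
  norm_num

theorem abs_rpow_sub_two_mul_sq_sub_le {p : ℝ} (hp : 2 ≤ p) (a b : ℝ) :
    |a| ^ (p - 2) * (a - b) ^ 2 ≤ 4 * (|a| ^ p + |b| ^ p) := by
  set m := max |a| |b|
  have hm : 0 ≤ m := (abs_nonneg a).trans (le_max_left _ _)
  have hab : |a - b| ≤ 2 * m := by
    linarith [abs_sub a b, le_max_left |a| |b|, le_max_right |a| |b|]
  calc |a| ^ (p - 2) * (a - b) ^ 2 ≤ m ^ (p - 2) * (2 * m) ^ 2 := by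
        gcongr ?_ * ?_
        · exact rpow_le_rpow (abs_nonneg a) (le_max_left _ _) (by linarith)
        · rw [← sq_abs]; gcongr
    _ = 4 * m ^ p := by rw [← rpow_sub_two_mul_sq hp hm]; ring
    _ ≤ 4 * (|a| ^ p + |b| ^ p) := by
        gcongr; exact max_rpow_le_rpow_add_rpow (abs_nonneg a) (abs_nonneg b) p

theorem abs_rpow_sub_abs_rpow_mul_le {p : ℝ} (hp : 2 ≤ p) (a b c : ℝ) :
    (|a| ^ p - |b| ^ p) * c ≤ 1 / 4 * (|a| ^ (p - 2) * (a - b) ^ 2 + |b| ^ (p - 2) * (a - b) ^ 2)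
      + p ^ 2 * c ^ 2 * (|a| ^ p + |b| ^ p) := by
  set m := max |a| |b|
  have hm : 0 ≤ m := (abs_nonneg a).trans (le_max_left _ _)
  have hm1 : m ^ (p - 1) = m ^ (p - 2) * m := by
    rw [← rpow_add_one' hm (by linarith)]; ring_nf
  calc (|a| ^ p - |b| ^ p) * c ≤ |(|a| ^ p - |b| ^ p)| * |c| := by
        rw [← abs_mul]; exact le_abs_self _
    _ ≤ |a - b| * p * m ^ (p - 1) * |c| := by
        gcongr; exact abs_abs_rpow_sub_abs_rpow_le (by linarith) a b
    _ = m ^ (p - 2) * (|a - b| * (p * m * |c|)) := by rw [hm1]; ring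
    _ ≤ m ^ (p - 2) * (1 / 4 * |a - b| ^ 2 + (p * m * |c|) ^ 2) := by
        gcongr; nlinarith [sq_nonneg (|a - b| / 2 - p * m * |c|)]
    _ = 1 / 4 * (m ^ (p - 2) * (a - b) ^ 2) + p ^ 2 * c ^ 2 * (m ^ (p - 2) * m ^ 2) := by
        rw [sq_abs, mul_pow, mul_pow, sq_abs]; ring
    _ ≤ _ := by
        rw [rpow_sub_two_mul_sq hp hm, ← add_mul]
        gcongr <;> exact max_rpow_le_rpow_add_rpow (abs_nonneg a) (abs_nonneg b) _

end Real

section Integral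

variable {X : Type*} [MeasurableSpace X] {μ : Measure X}

theorem inner_toLp_eq_integral_mul {f g : X → ℝ} (hf : MemLp f 2 μ) (hg : MemLp g 2 μ) :
    inner ℝ (hf.toLp f) (hg.toLp g) = ∫ x, f x * g x ∂μ := by
  rw [L2.inner_def]
  refine integral_congr_ae ?_
  filter_upwards [hf.coeFn_toLp, hg.coeFn_toLp] with x hfx hgx
  rw [hfx, hgx, real_inner_eq_re_inner, RCLike.inner_apply]
  simp [mul_comm]

theorem sq_integral_mul_le_integral_sq_mul_integral_sq {f g : X → ℝ} (hf : MemLp f 2 μ)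
    (hg : MemLp g 2 μ) :
    (∫ x, f x * g x ∂μ) ^ 2 ≤ (∫ x, f x ^ 2 ∂μ) * ∫ x, g x ^ 2 ∂μ := by
  simpa only [inner_toLp_eq_integral_mul, sq] using
    real_inner_mul_inner_self_le (hf.toLp f) (hg.toLp g)

theorem integrable_abs_rpow_sub_two_mul_sq_sub {p : ℝ} (hp : 2 ≤ p) {u v : X → ℝ}
    (hu : Measurable u) (hv : Measurable v) (hup : Integrable (fun x => |u x| ^ p) μ)
    (hvp : Integrable (fun x => |v x| ^ p) μ) :
    Integrable (fun x => |u x| ^ (p - 2) * (u x - v x) ^ 2) μ := by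
  refine ((hup.add hvp).const_mul 4).mono' (by fun_prop) (ae_of_all _ fun x => ?_)
  rw [Real.norm_of_nonneg (by positivity)]
  exact Real.abs_rpow_sub_two_mul_sq_sub_le hp (u x) (v x)

end Integral

theorem stmt_14 {X : Type*} [MeasurableSpace X] (μ : Measure X)
    (p : ℝ) (hp : 2 ≤ p) (u v : X → ℝ)
    (hu : Measurable u) (hv : Measurable v)
    (hup : Integrable (fun x => |u x| ^ p) μ)
    (hvp : Integrable (fun x => |v x| ^ p) μ)
    (hu2 : Integrable (fun x => (u x) ^ 2) μ)
    (hv2 : Integrable (fun x => (v x) ^ 2) μ) :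
    ((∫ x, |u x| ^ p ∂μ) - (∫ x, |v x| ^ p ∂μ)) * (∫ x, v x * (u x - v x) ∂μ)
      ≤ (1 / 4) * ((∫ x, |u x| ^ (p - 2) * (u x - v x) ^ 2 ∂μ)
          + (∫ x, |v x| ^ (p - 2) * (u x - v x) ^ 2 ∂μ))
        + p ^ 2 * (2 : ℝ) ^ (2 * p - 4)
          * ((∫ x, |u x| ^ p ∂μ) + (∫ x, |v x| ^ p ∂μ))
          * (∫ x, (v x) ^ 2 ∂μ) * (∫ x, (u x - v x) ^ 2 ∂μ) := by
  have hI₁ := integrable_abs_rpow_sub_two_mul_sq_sub hp hu hv hup hvp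
  have hI₂ : Integrable (fun x => |v x| ^ (p - 2) * (u x - v x) ^ 2) μ := by
    simpa only [sub_sq_comm (v _)] using integrable_abs_rpow_sub_two_mul_sq_sub hp hv hu hvp hup
  have huL2 := (memLp_two_iff_integrable_sq hu.aestronglyMeasurable).2 hu2
  have hvL2 := (memLp_two_iff_integrable_sq hv.aestronglyMeasurable).2 hv2
  set B := ∫ x, v x * (u x - v x) ∂μ
  have hB : B ^ 2 ≤ 2 ^ (2 * p - 4) * ((∫ x, v x ^ 2 ∂μ) * ∫ x, (u x - v x) ^ 2 ∂μ) :=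
    (sq_integral_mul_le_integral_sq_mul_integral_sq hvL2 (huL2.sub hvL2)).trans
      (le_mul_of_one_le_left (by positivity) (Real.one_le_rpow one_le_two (by linarith)))
  have hR₁ : Integrable (fun x => 1 / 4 * (|u x| ^ (p - 2) * (u x - v x) ^ 2
      + |v x| ^ (p - 2) * (u x - v x) ^ 2)) μ := (hI₁.add hI₂).const_mul _
  have hR₂ : Integrable (fun x => p ^ 2 * B ^ 2 * (|u x| ^ p + |v x| ^ p)) μ :=
    (hup.add hvp).const_mul _
  have key := integral_mono ((hup.sub hvp).mul_const B) (hR₁.add hR₂)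
    fun x => Real.abs_rpow_sub_abs_rpow_mul_le hp (u x) (v x) B
  simp only [Pi.add_apply, Pi.sub_apply] at key
  rw [integral_mul_const, integral_sub hup hvp, integral_add hR₁ hR₂, integral_const_mul,
    integral_const_mul, integral_add hI₁ hI₂, integral_add hup hvp] at key
  refine key.trans ?_
  have hS : 0 ≤ p ^ 2 * ((∫ x, |u x| ^ p ∂μ) + ∫ x, |v x| ^ p ∂μ) := by positivity
  nlinarith [mul_le_mul_of_nonneg_left hB hS]
end
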